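/- arXiv:1806.10880 — 3 statements merged into one kernel-verified Lean document; each statement's English description precedes it below -/
import Mathlib

section
/- For the coupled Burgers system ∂_t u + u∂_x(u+v) = 0, ∂_t v + v∂_x(u+v) = 0 with entropy η(u,v) = (u+v)²/2 and entropy flux q(u,v) = (u+v)³/3, the fluctuation fluxes D⁻ = (⟦u+v⟧/6)(2u⁻+u⁺, 2v⁻+v⁺)ᵀ and D⁺ = (⟦u+v⟧/6)(u⁻+2u⁺, v⁻+2v⁺)ᵀ are entropy conservative: ∇η(u⁻,v⁻)·D⁻ + ∇η(u⁺,v⁺)·D⁺ = q(u⁺,v⁺) − q(u⁻,v⁻), where ⟦a⟧ = a⁺ − a⁻. -/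
/-- Entropy conservation of the fluctuation fluxes for the coupled Burgers system. -/
theorem coupled_burgers_entropy_conservative (um vm up vp : ℝ) :
    ((um + vm) * (((up + vp) - (um + vm)) / 6 * (2 * um + up))
        + (um + vm) * (((up + vp) - (um + vm)) / 6 * (2 * vm + vp)))
      + ((up + vp) * (((up + vp) - (um + vm)) / 6 * (um + 2 * up))
        + (up + vp) * (((up + vp) - (um + vm)) / 6 * (vm + 2 * vp)))
      = (up + vp) ^ 3 / 3 - (um + vm) ^ 3 / 3 := by
  ring
end

section
/- Let D_{kl}, ω_k satisfy the SBP property ω_k D_{kl} + ω_l D_{lk} = δ_{kl}(δ_{kp} − δ_{k0}). Let G: {0,...,p}² → ℝ be symmetric, G(k,l) = G(l,k), with boundary values G(p,p) = g_p and G(0,0) = g_0. Then ∑_{k,l} ω_k G(k,l) D_{kl} = ½(g_p − g_0). -/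
/-- Abstract SBP mechanism: a symmetric two-point quantity contracted against
the SBP difference matrix telescopes to boundary contributions. -/
theorem sbp_symmetric_contraction {p : ℕ} (D : Fin (p + 1) → Fin (p + 1) → ℝ)
    (ω : Fin (p + 1) → ℝ) (hω : ∀ k, 0 < ω k)
    (hSBP : ∀ k l, ω k * D k l + ω l * D l k
      = (if k = l then ((if k = Fin.last p then (1 : ℝ) else 0)
          - (if k = 0 then (1 : ℝ) else 0)) else 0))
    (G : Fin (p + 1) → Fin (p + 1) → ℝ)
    (hGsym : ∀ k l, G k l = G l k)
    (gp g0 : ℝ) (hGp : G (Fin.last p) (Fin.last p) = gp) (hG0 : G 0 0 = g0) :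
    ∑ k, ∑ l, ω k * G k l * D k l = (gp - g0) / 2 := by
  set S := ∑ k, ∑ l, ω k * G k l * D k l with hS
  have hswap : S = ∑ k, ∑ l, ω l * G k l * D l k := by
    rw [hS, Finset.sum_comm]
    exact Finset.sum_congr rfl fun k _ => Finset.sum_congr rfl fun l _ => by
      rw [hGsym k l]
  have h2 : S + S = gp - g0 := by
    nth_rewrite 2 [hswap]
    rw [hS, ← Finset.sum_add_distrib]
    have : ∀ k : Fin (p+1), (∑ l, ω k * G k l * D k l) + (∑ l, ω l * G k l * D l k)
        = ∑ l, G k l * (ω k * D k l + ω l * D l k) := by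
      intro k
      rw [← Finset.sum_add_distrib]
      exact Finset.sum_congr rfl fun l _ => by ring
    simp only [this, hSBP]
    have : ∀ k : Fin (p+1), (∑ l, G k l * (if k = l then ((if k = Fin.last p then (1:ℝ) else 0)
          - (if k = 0 then (1:ℝ) else 0)) else 0))
        = G k k * ((if k = Fin.last p then (1:ℝ) else 0) - (if k = 0 then (1:ℝ) else 0)) := by
      intro k
      rw [Finset.sum_eq_single k]
      · simp
      · intro l _ hl; simp [Ne.symm hl]
      · simp
    simp only [this]
    simp only [mul_sub, Finset.sum_sub_distrib, mul_ite, mul_one, mul_zero]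
    rw [Finset.sum_ite_eq' Finset.univ (Fin.last p) (fun k => G k k),
        Finset.sum_ite_eq' Finset.univ (0 : Fin (p+1)) (fun k => G k k)]
    simp [hGp, hG0]
  linarith
end

section
/- Let η: ℝᵐ → ℝ be convex, U^0,...,U^p ∈ ℝᵐ, ω_k > 0 with ∑ω_k = 2, and let ⟨u⟩ = ½∑_k ω_k U^k. For θ ∈ [0,1], define Ũ^k = θ(U^k − ⟨u⟩) + ⟨u⟩. Then ∑_k (ω_k/2) η(Ũ^k) ≤ ∑_k (ω_k/2) η(U^k). -/
/-- The linear scaling limiter does not increase the cell-averaged entropy. -/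
theorem limiter_entropy_nonincreasing {m p : ℕ}
    (η : (Fin m → ℝ) → ℝ) (hη : ConvexOn ℝ Set.univ η)
    (U : Fin (p + 1) → (Fin m → ℝ))
    (ω : Fin (p + 1) → ℝ) (hω : ∀ k, 0 < ω k) (hsum : ∑ k, ω k = 2)
    (θ : ℝ) (hθ0 : 0 ≤ θ) (hθ1 : θ ≤ 1) :
    ∑ k, (ω k / 2) * η (θ • (U k - (1 / 2 : ℝ) • ∑ l, ω l • U l)
        + (1 / 2 : ℝ) • ∑ l, ω l • U l)
      ≤ ∑ k, (ω k / 2) * η (U k) := by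
  set A : Fin m → ℝ := (1 / 2 : ℝ) • ∑ l, ω l • U l with hA
  set S : ℝ := ∑ k, (ω k / 2) * η (U k) with hS
  have hw0 : ∀ k ∈ Finset.univ, (0:ℝ) ≤ ω k / 2 := fun k _ => by
    have := (hω k).le; linarith
  have hw1 : ∑ k, ω k / 2 = 1 := by
    rw [← Finset.sum_div, hsum]; norm_num
  have hjensen : η A ≤ S := by
    have h := hη.map_sum_le hw0 hw1 (fun k _ => Set.mem_univ (U k))
    have hAeq : A = ∑ k, (ω k / 2) • U k := by
      rw [hA, Finset.smul_sum]
      refine Finset.sum_congr rfl fun k _ => ?_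
      rw [smul_smul]; ring_nf
    rw [hAeq]; exact h
  have hθ' : (0:ℝ) ≤ 1 - θ := by linarith
  have hmain : ∀ k, η (θ • (U k - A) + A) ≤ θ * η (U k) + (1 - θ) * η A := by
    intro k
    have h := hη.2 (Set.mem_univ (U k)) (Set.mem_univ A) hθ0 hθ' (by ring)
    simp only [smul_eq_mul] at h
    calc η (θ • (U k - A) + A) = η (θ • U k + (1 - θ) • A) := by
          congr 1
          simp [smul_sub, sub_smul]
          abel
      _ ≤ θ * η (U k) + (1 - θ) * η A := h
  have key : ∑ k, (ω k / 2) * (θ * η (U k) + (1 - θ) * η A)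
      = θ * S + (1 - θ) * η A := by
    simp only [mul_add, Finset.sum_add_distrib]
    congr 1
    · rw [hS, Finset.mul_sum]
      exact Finset.sum_congr rfl fun k _ => by ring
    · rw [← Finset.sum_mul, hw1, one_mul]
  calc ∑ k, (ω k / 2) * η (θ • (U k - A) + A)
      ≤ ∑ k, (ω k / 2) * (θ * η (U k) + (1 - θ) * η A) := by
        refine Finset.sum_le_sum fun k _ => ?_
        exact mul_le_mul_of_nonneg_left (hmain k) (hw0 k (Finset.mem_univ k))
    _ = θ * S + (1 - θ) * η A := key
    _ ≤ S := by nlinarith [hjensen]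
end
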